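/- For real μ > -1, the function p_{μ,a}(u,r) = (r/u)^μ · (r/a) · exp(-(u²+r²)/(2a)) · I_μ(ur/a) is a probability density in r on (0,∞) for each fixed u > 0 and a > 0, i.e., ∫_0^∞ p_{μ,a}(u,r) dr = 1. -/

import Mathlib

/-!
Expanding `I_μ` in its series shows that `p_{μ,a}(u, ·)` is the Poisson mixture
`∑ₙ e^{-x} xⁿ / n! · p_{μ+n,a}(0, ·)` with `x = u² / (2a)`. Each density `p_{ν,a}(0, ·)`
integrates to `1` by the Gamma integral, the Poisson weights sum to `1`, and since all terms are
nonnegative the integral and the sum may be interchanged.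
-/

open MeasureTheory

/-- Modified Bessel function of the first kind of real order `μ`,
defined by its series for positive real arguments. -/
noncomputable def besselIReal (μ : ℝ) (ξ : ℝ) : ℝ :=
  ∑' n : ℕ, (ξ / 2) ^ (μ + 2 * (n : ℝ)) / ((n.factorial : ℝ) * Real.Gamma (μ + 1 + n))

open Real Set
open scoped Nat

/-- `p_{ν,a}(0, r)`: the transition density of the Bessel process of index `ν` started at `0`. -/
noncomputable def besselEntranceDensity (ν a r : ℝ) : ℝ :=
  r ^ (2 * ν + 1) * exp (-r ^ 2 / (2 * a)) / (Gamma (ν + 1) * (2 * a) ^ ν * a)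

noncomputable def poissonWeight (x : ℝ) (n : ℕ) : ℝ :=
  exp (-x) * x ^ n / n !

theorem hasSum_poissonWeight (x : ℝ) : HasSum (poissonWeight x) 1 := by
  have h := (NormedSpace.expSeries_div_hasSum_exp x).mul_left (exp (-x))
  rw [← Real.exp_eq_exp_ℝ, ← exp_add, neg_add_cancel, exp_zero] at h
  show HasSum (fun n ↦ exp (-x) * x ^ n / n !) 1
  simpa only [mul_div_assoc] using h

section EntranceDensity

variable {ν a : ℝ}

theorem besselEntranceDensity_eq :
    besselEntranceDensity ν a = fun r ↦
      r ^ (2 * ν + 1) * exp (-(2 * a)⁻¹ * r ^ 2) / (Gamma (ν + 1) * (2 * a) ^ ν * a) := by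
  funext r
  rw [besselEntranceDensity, neg_mul, ← div_eq_inv_mul, neg_div]

theorem integrableOn_besselEntranceDensity (hν : -1 < ν) (ha : 0 < a) :
    IntegrableOn (besselEntranceDensity ν a) (Ioi 0) := by
  rw [besselEntranceDensity_eq]
  exact (integrableOn_rpow_mul_exp_neg_mul_sq (by positivity) (by linarith)).div_const _

theorem integral_besselEntranceDensity (hν : -1 < ν) (ha : 0 < a) :
    ∫ r in Ioi 0, besselEntranceDensity ν a r = 1 := by
  have h2a : 0 < 2 * a := by positivity
  have hΓ : 0 < Gamma (ν + 1) := Gamma_pos_of_pos (by linarith)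
  have h := integral_rpow_mul_exp_neg_mul_rpow two_pos (by linarith : -1 < 2 * ν + 1)
    (inv_pos.2 h2a)
  rw [neg_div, show (2 * ν + 1 + 1) / 2 = ν + 1 by ring, inv_rpow h2a.le, rpow_neg h2a.le,
    inv_inv, rpow_add_one h2a.ne'] at h
  simp_rw [besselEntranceDensity_eq, integral_div, ← rpow_two, h]
  field_simp

theorem besselEntranceDensity_nonneg (hν : -1 < ν) (ha : 0 < a) {r : ℝ} (hr : 0 ≤ r) :
    0 ≤ besselEntranceDensity ν a r := by
  have hΓ : 0 < Gamma (ν + 1) := Gamma_pos_of_pos (by linarith)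
  unfold besselEntranceDensity
  positivity

end EntranceDensity

theorem rpow_add_two_mul_natCast {y : ℝ} (hy : 0 < y) (μ : ℝ) (n : ℕ) :
    y ^ (μ + 2 * (n : ℝ)) = y ^ μ * (y ^ 2) ^ n := by
  rw [rpow_add hy, rpow_mul hy.le, rpow_two, rpow_natCast]

theorem bessel_density_summand_eq (μ : ℝ) (n : ℕ) {a u r : ℝ} (ha : 0 < a) (hu : 0 < u)
    (hr : 0 < r) :
    (r / u) ^ μ * (r / a) * exp (-(u ^ 2 + r ^ 2) / (2 * a)) *
        ((u * r / a / 2) ^ (μ + 2 * (n : ℝ)) / (n ! * Gamma (μ + 1 + n))) =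
      poissonWeight (u ^ 2 / (2 * a)) n * besselEntranceDensity (μ + n) a r := by
  have h2a : 0 < 2 * a := by positivity
  have hexp : exp (-(u ^ 2 + r ^ 2) / (2 * a)) =
      exp (-(u ^ 2 / (2 * a))) * exp (-r ^ 2 / (2 * a)) := by
    rw [← exp_add]
    ring_nf
  have hr_pow : r ^ (2 * (μ + n) + 1) = r ^ μ * (r ^ μ * (r ^ 2) ^ n) * r := by
    rw [show 2 * (μ + n) + 1 = μ + (μ + 2 * (n : ℝ)) + 1 by ring, rpow_add_one hr.ne',
      rpow_add hr, rpow_add_two_mul_natCast hr]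
  have hsq :
      ((u * r / (2 * a)) ^ 2) ^ n = (u ^ 2 / (2 * a)) ^ n * (r ^ 2) ^ n / (2 * a) ^ n := by
    rw [← mul_pow, ← div_pow]
    congr 1
    ring
  rw [show u * r / a / 2 = u * r / (2 * a) by ring, rpow_add_two_mul_natCast (by positivity),
    div_rpow (by positivity) h2a.le, mul_rpow hu.le hr.le, div_rpow hr.le hu.le, hexp,
    poissonWeight, besselEntranceDensity, hr_pow, rpow_add h2a, rpow_natCast,
    add_right_comm μ (n : ℝ) 1, hsq]
  generalize (u ^ 2 / (2 * a)) ^ n = X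
  field_simp

theorem bessel_density_eq_tsum (μ : ℝ) {a u r : ℝ} (ha : 0 < a) (hu : 0 < u) (hr : 0 < r) :
    (r / u) ^ μ * (r / a) * exp (-(u ^ 2 + r ^ 2) / (2 * a)) * besselIReal μ (u * r / a) =
      ∑' n : ℕ, poissonWeight (u ^ 2 / (2 * a)) n * besselEntranceDensity (μ + n) a r := by
  rw [besselIReal, ← tsum_mul_left]
  exact tsum_congr fun n ↦ bessel_density_summand_eq μ n ha hu hr

theorem integral_tsum_poissonWeight_mul_besselEntranceDensity {μ a x : ℝ} (hμ : -1 < μ)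
    (ha : 0 < a) (hx : 0 ≤ x) :
    ∫ r in Ioi 0, ∑' n : ℕ, poissonWeight x n * besselEntranceDensity (μ + n) a r = 1 := by
  have hν (n : ℕ) : -1 < μ + n := by linarith [(n.cast_nonneg : (0 : ℝ) ≤ n)]
  have hterm (n : ℕ) : ∫ r in Ioi 0, poissonWeight x n * besselEntranceDensity (μ + n) a r =
      poissonWeight x n := by
    rw [integral_const_mul, integral_besselEntranceDensity (hν n) ha, mul_one]
  have hnorm (n : ℕ) :
      ∫ r in Ioi 0, ‖poissonWeight x n * besselEntranceDensity (μ + n) a r‖ =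
        poissonWeight x n := by
    refine .trans (setIntegral_congr_fun measurableSet_Ioi fun r hr ↦ ?_) (hterm n)
    have hw : 0 ≤ poissonWeight x n := by unfold poissonWeight; positivity
    exact norm_of_nonneg (mul_nonneg hw (besselEntranceDensity_nonneg (hν n) ha hr.le))
  rw [← integral_tsum_of_summable_integral_norm
    (fun n ↦ (integrableOn_besselEntranceDensity (hν n) ha).const_mul _)
    (by simpa only [hnorm] using (hasSum_poissonWeight x).summable)]
  simpa only [hterm] using (hasSum_poissonWeight x).tsum_eq

theorem bessel_semigroup_density_integral (μ : ℝ) (hμ : -1 < μ)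
    (a u : ℝ) (ha : 0 < a) (hu : 0 < u) :
    ∫ r in Set.Ioi (0 : ℝ),
        (r / u) ^ μ * (r / a) * Real.exp (-(u ^ 2 + r ^ 2) / (2 * a)) *
          besselIReal μ (u * r / a) = 1 := by
  rw [setIntegral_congr_fun measurableSet_Ioi fun r hr ↦ bessel_density_eq_tsum μ ha hu hr]
  exact integral_tsum_poissonWeight_mul_besselEntranceDensity hμ ha (by positivity)
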